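/- Every point (u,p,v,π) ∈ ℝ^{2(p+q)} satisfying H₁ = H₂ = D = 0 at which the pairs (u,p) and (v,π) are both linearly independent is SL(2,ℝ)-gauge-equivalent (under the action (u,p)ᵀ↦g(u,p)ᵀ componentwise, (π,v)ᵀ↦g(π,v)ᵀ componentwise) to a point satisfying u·u = p·p = v·v = π·π > 0 and u·p = v·π = 0. -/

import Mathlib

/-! The constraints `H₁ = H₂ = D = 0` say exactly that the frames `(u, p)` and `(π, v)` have the
same Gram matrix `G`, and the gauge action replaces each frame `V` by `g V`, hence `G` by
`g G gᵀ`. Linear independence of `(u, p)` makes `G` positive definite, and a lower-triangular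
`g ∈ SL(2, ℝ)` (Gram–Schmidt for the form `G`) brings `G` to `√(det G) • 1`, which is the required
gauge for both frames at once. -/

open scoped BigOperators

namespace Stmt7

abbrev Phase (np nq : ℕ) := (Fin np → ℝ) × (Fin np → ℝ) × (Fin nq → ℝ) × (Fin nq → ℝ)

variable {np nq : ℕ}

noncomputable def H1 (x : Phase np nq) : ℝ :=
  (1/2) * ((∑ i, (x.2.1 i)^2) - ∑ j, (x.2.2.1 j)^2)

noncomputable def H2 (x : Phase np nq) : ℝ :=
  (1/2) * ((∑ j, (x.2.2.2 j)^2) - ∑ i, (x.1 i)^2)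

noncomputable def Dc (x : Phase np nq) : ℝ :=
  (∑ i, x.1 i * x.2.1 i) - ∑ j, x.2.2.1 j * x.2.2.2 j

/-- Euclidean dot product. -/
noncomputable def dot {n : ℕ} (a b : Fin n → ℝ) : ℝ := ∑ i, a i * b i

/-- The simultaneous `SL(2,ℝ)` gauge action: `(u_k,p_k)ᵀ ↦ g(u_k,p_k)ᵀ` and
`(π_k,v_k)ᵀ ↦ g(π_k,v_k)ᵀ`, written on `(u,p,v,π)`. -/
noncomputable def gact (g : Matrix.SpecialLinearGroup (Fin 2) ℝ) (x : Phase np nq) :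
    Phase np nq :=
  (fun i => (g : Matrix (Fin 2) (Fin 2) ℝ) 0 0 * x.1 i
      + (g : Matrix (Fin 2) (Fin 2) ℝ) 0 1 * x.2.1 i,
   fun i => (g : Matrix (Fin 2) (Fin 2) ℝ) 1 0 * x.1 i
      + (g : Matrix (Fin 2) (Fin 2) ℝ) 1 1 * x.2.1 i,
   fun j => (g : Matrix (Fin 2) (Fin 2) ℝ) 1 0 * x.2.2.2 j
      + (g : Matrix (Fin 2) (Fin 2) ℝ) 1 1 * x.2.2.1 j,
   fun j => (g : Matrix (Fin 2) (Fin 2) ℝ) 0 0 * x.2.2.2 j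
      + (g : Matrix (Fin 2) (Fin 2) ℝ) 0 1 * x.2.2.1 j)


open Matrix
open scoped MatrixGroups

local notation:1024 "↑ₘ" A:1024 => ((A : SL(2, ℝ)) : Matrix (Fin 2) (Fin 2) ℝ)

lemma exists_SL2_mul_mul_transpose_eq_smul_one {G : Matrix (Fin 2) (Fin 2) ℝ} (hG : G.PosDef) :
    ∃ g : SL(2, ℝ), ↑ₘg * G * (↑ₘg)ᵀ = √G.det • 1 := by
  have ha : 0 < G 0 0 := hG.diag_pos
  have hdet : 0 < G.det := hG.det_pos
  have hsymm : G 1 0 = G 0 1 := by simpa using congrFun₂ hG.isHermitian 0 1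
  set L := √G.det
  have hL : L ^ 2 = G 0 0 * G 1 1 - G 0 1 ^ 2 := by
    rw [Real.sq_sqrt hdet.le, det_fin_two, hsymm, sq]
  set s := √(L / G 0 0)
  have hs : 0 < s := Real.sqrt_pos.2 (div_pos (Real.sqrt_pos.2 hdet) ha)
  have hsL : G 0 0 * s ^ 2 = L := by
    rw [Real.sq_sqrt (div_pos (Real.sqrt_pos.2 hdet) ha).le, mul_div_cancel₀ L ha.ne']
  -- The first row of `g` has `G`-norm `√L` and the second is `G`-orthogonal to it;
  -- `det g = 1` then forces the second row to have `G`-norm `√L` as well.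
  refine ⟨⟨!![s, 0; -G 0 1 / (G 0 0 * s), s⁻¹], by simp [det_fin_two_of, hs.ne']⟩, ?_⟩
  simp only [← Matrix.ext_iff, Fin.forall_fin_two, mul_apply, Fin.sum_univ_two, transpose_apply,
    one_fin_two, of_apply, cons_val_zero, cons_val_one, cons_val', cons_val_fin_one,
    Matrix.smul_apply, smul_eq_mul, hsymm]
  refine ⟨⟨?_, ?_⟩, ?_, ?_⟩ <;> field_simp
  · linear_combination hsL
  · ring
  · ring
  · linear_combination -hL - L * hsL

lemma posDef_mul_transpose_of_linearIndependent {m n : Type*} [Fintype m] [Fintype n]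
    [DecidableEq m] {V : Matrix m n ℝ} (hV : LinearIndependent ℝ V.row) : (V * Vᵀ).PosDef := by
  simpa using PosDef.mul_conjTranspose_self V (vecMul_injective_iff.2 hV)

lemma dot_eq_mul_transpose_apply {m : Type*} {n : ℕ} (M : Matrix m (Fin n) ℝ) (i j : m) :
    dot (M i) (M j) = (M * Mᵀ) i j :=
  rfl

lemma mul_mul_transpose_mul {m k n : Type*} [Fintype m] [Fintype k] [Fintype n]
    (g : Matrix m k ℝ) (V : Matrix k n ℝ) : (g * V) * (g * V)ᵀ = g * (V * Vᵀ) * gᵀ := by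
  simp only [transpose_mul, Matrix.mul_assoc]

def upFrame (x : Phase np nq) : Matrix (Fin 2) (Fin np) ℝ := of ![x.1, x.2.1]

def πvFrame (x : Phase np nq) : Matrix (Fin 2) (Fin nq) ℝ := of ![x.2.2.2, x.2.2.1]

lemma gact_eq_rows (g : SL(2, ℝ)) (x : Phase np nq) :
    gact g x =
      ((↑ₘg * upFrame x) 0, (↑ₘg * upFrame x) 1, (↑ₘg * πvFrame x) 1, (↑ₘg * πvFrame x) 0) := by
  ext i <;> simp [gact, upFrame, πvFrame, mul_apply, Fin.sum_univ_two]

lemma upFrame_mul_transpose_eq_πvFrame {x : Phase np nq} (h1 : H1 x = 0) (h2 : H2 x = 0)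
    (hD : Dc x = 0) : upFrame x * (upFrame x)ᵀ = πvFrame x * (πvFrame x)ᵀ := by
  have huu : dot x.1 x.1 = dot x.2.2.2 x.2.2.2 := by
    simp only [H2, dot, ← sq] at h2 ⊢
    linarith
  have hpp : dot x.2.1 x.2.1 = dot x.2.2.1 x.2.2.1 := by
    simp only [H1, dot, ← sq] at h1 ⊢
    linarith
  have hup : dot x.1 x.2.1 = dot x.2.2.2 x.2.2.1 := by
    simp only [dot, mul_comm (x.2.2.2 _)]
    exact sub_eq_zero.1 hD
  have hpu : dot x.2.1 x.1 = dot x.2.2.1 x.2.2.2 := by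
    simpa only [dot, mul_comm] using hup
  ext i j
  fin_cases i <;> fin_cases j
  exacts [huu, hup, hpu, hpp]

theorem regular_gauge_fixing (x : Phase np nq)
    (h1 : H1 x = 0) (h2 : H2 x = 0) (hD : Dc x = 0)
    (hup : ∀ a b : ℝ, a • x.1 + b • x.2.1 = 0 → a = 0 ∧ b = 0) :
    ∃ g : Matrix.SpecialLinearGroup (Fin 2) ℝ,
      dot (gact g x).1 (gact g x).1 = dot (gact g x).2.1 (gact g x).2.1 ∧
      dot (gact g x).2.1 (gact g x).2.1 = dot (gact g x).2.2.1 (gact g x).2.2.1 ∧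
      dot (gact g x).2.2.1 (gact g x).2.2.1 = dot (gact g x).2.2.2 (gact g x).2.2.2 ∧
      0 < dot (gact g x).1 (gact g x).1 ∧
      dot (gact g x).1 (gact g x).2.1 = 0 ∧
      dot (gact g x).2.2.1 (gact g x).2.2.2 = 0 := by
  have hpos : (upFrame x * (upFrame x)ᵀ).PosDef :=
    posDef_mul_transpose_of_linearIndependent (LinearIndependent.pair_iff.2 hup)
  obtain ⟨g, hg⟩ := exists_SL2_mul_mul_transpose_eq_smul_one hpos
  set L := √(upFrame x * (upFrame x)ᵀ).det
  have hL : 0 < L := Real.sqrt_pos.2 hpos.det_pos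
  have hgU : (↑ₘg * upFrame x) * (↑ₘg * upFrame x)ᵀ = L • 1 := by
    rw [mul_mul_transpose_mul, hg]
  have hgW : (↑ₘg * πvFrame x) * (↑ₘg * πvFrame x)ᵀ = L • 1 := by
    rw [mul_mul_transpose_mul, ← upFrame_mul_transpose_eq_πvFrame h1 h2 hD, hg]
  refine ⟨g, ?_⟩
  simp only [gact_eq_rows, dot_eq_mul_transpose_apply, hgU, hgW]
  simp [hL]

end Stmt7
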